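/- Let f : ℝⁿ → ℝ be differentiable with L-Lipschitz gradient and bounded below by f*. Suppose ω^{t+1} = ω^t - γ g^t with g^t = ∇f(ω^t) + e^t, γ ∈ (0, 1/L], and ‖e^t‖ ≤ ε for all t. Then min_{0 ≤ t < T} ‖∇f(ω^t)‖² ≤ 2(f(ω^0) - f*)/(γ T) + ε². -/

import Mathlib

/-!
By the descent lemma, a step `ω⁺ = ω - γ (∇f ω + e)` with `γ L ≤ 1` satisfies
`f ω⁺ ≤ f ω - γ/2 ‖∇f ω‖² + γ/2 ‖e‖²`: the quadratic model is at most
`-γ (⟪∇f, g⟫ - ‖g‖²/2) = γ/2 (‖g - ∇f‖² - ‖∇f‖²)`. Summing over `t < T` telescopes to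
`γ/2 ∑ ‖∇f ωₜ‖² ≤ f ω₀ - f* + T γ ε² / 2`, and the smallest term is at most the average.
-/

open Finset

open scoped RealInnerProductSpace

section Descent

variable {F : Type*} [NormedAddCommGroup F] [InnerProductSpace ℝ F] [CompleteSpace F]
  {f : F → ℝ} {f' : F → F} {L : ℝ}

theorem HasGradientAt.hasDerivAt_comp_add_smul {g x v : F} {s : ℝ}
    (h : HasGradientAt f g (x + s • v)) :
    HasDerivAt (fun s : ℝ => f (x + s • v)) ⟪g, v⟫ s := by
  have hline : HasDerivAt (fun s : ℝ => x + s • v) v s := by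
    simpa using ((hasDerivAt_id s).smul_const v).const_add x
  have hcomp := h.hasFDerivAt.comp_hasDerivAt s hline
  simp only [InnerProductSpace.toDual_apply_apply] at hcomp
  exact hcomp

theorem le_add_inner_add_of_lipschitz_gradient (hf : ∀ x, HasGradientAt f (f' x) x)
    (hLip : ∀ x y, ‖f' x - f' y‖ ≤ L * ‖x - y‖) (x v : F) :
    f (x + v) ≤ f x + ⟪f' x, v⟫ + L / 2 * ‖v‖ ^ 2 := by
  set φ : ℝ → ℝ := fun s => f (x + s • v) - s * ⟪f' x, v⟫ - L / 2 * s ^ 2 * ‖v‖ ^ 2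
  have hφ : ∀ s : ℝ, HasDerivAt φ (⟪f' (x + s • v), v⟫ - ⟪f' x, v⟫ - L * s * ‖v‖ ^ 2) s :=
    fun s => by
      refine (((hf _).hasDerivAt_comp_add_smul.sub ((hasDerivAt_id s).mul_const _)).sub
        (((hasDerivAt_pow 2 s).const_mul (L / 2)).mul_const _)).congr_deriv ?_
      ring
  have hφ_nonpos : ∀ s ∈ interior (Set.Ici (0 : ℝ)),
      ⟪f' (x + s • v), v⟫ - ⟪f' x, v⟫ - L * s * ‖v‖ ^ 2 ≤ 0 := by
    intro s hs
    rw [interior_Ici, Set.mem_Ioi] at hs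
    calc ⟪f' (x + s • v), v⟫ - ⟪f' x, v⟫ - L * s * ‖v‖ ^ 2
        = ⟪f' (x + s • v) - f' x, v⟫ - L * s * ‖v‖ ^ 2 := by rw [inner_sub_left]
      _ ≤ ‖f' (x + s • v) - f' x‖ * ‖v‖ - L * s * ‖v‖ ^ 2 := by
          gcongr; exact real_inner_le_norm _ _
      _ ≤ L * ‖s • v‖ * ‖v‖ - L * s * ‖v‖ ^ 2 := by
          gcongr; simpa using hLip (x + s • v) x
      _ = 0 := by rw [norm_smul, Real.norm_of_nonneg hs.le]; ring
  have hanti : AntitoneOn φ (Set.Ici 0) :=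
    antitoneOn_of_hasDerivWithinAt_nonpos (convex_Ici 0)
      (fun s _ => (hφ s).continuousAt.continuousWithinAt)
      (fun s _ => (hφ s).hasDerivWithinAt) hφ_nonpos
  have h10 : φ 1 ≤ φ 0 := hanti Set.self_mem_Ici (Set.mem_Ici.mpr zero_le_one) zero_le_one
  simp only [φ, zero_smul, add_zero, one_smul] at h10
  linarith

theorem le_sub_add_of_biased_gradient_step (hf : ∀ x, HasGradientAt f (f' x) x)
    (hLip : ∀ x y, ‖f' x - f' y‖ ≤ L * ‖x - y‖) {γ : ℝ} (hγ : 0 ≤ γ) (hγL : γ * L ≤ 1)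
    (x e : F) :
    f (x - γ • (f' x + e)) ≤ f x - γ / 2 * ‖f' x‖ ^ 2 + γ / 2 * ‖e‖ ^ 2 := by
  set g := f' x + e
  have hquad := le_add_inner_add_of_lipschitz_gradient hf hLip x (-(γ • g))
  rw [← sub_eq_add_neg, inner_neg_right, inner_smul_right, norm_neg, norm_smul,
    Real.norm_of_nonneg hγ] at hquad
  have hstep : L / 2 * (γ * ‖g‖) ^ 2 ≤ γ / 2 * ‖g‖ ^ 2 := by
    have := mul_le_mul_of_nonneg_left hγL (mul_nonneg hγ (sq_nonneg ‖g‖))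
    nlinarith
  have he : ‖e‖ ^ 2 = ‖g‖ ^ 2 - 2 * ⟪g, f' x⟫ + ‖f' x‖ ^ 2 := by
    rw [← norm_sub_sq_real, add_sub_cancel_left]
  rw [real_inner_comm] at he
  nlinarith

end Descent

theorem exists_lt_le_of_telescoping {u a : ℕ → ℝ} {m c δ : ℝ} {T : ℕ} (hc : 0 < c) (hT : 0 < T)
    (hm : ∀ t, m ≤ u t) (h : ∀ t, c * a t ≤ u t - u (t + 1) + c * δ) :
    ∃ t < T, a t ≤ (u 0 - m) / (c * T) + δ := by
  have hsum : c * ∑ t ∈ range T, a t ≤ u 0 - m + T * (c * δ) :=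
    calc c * ∑ t ∈ range T, a t
        ≤ ∑ t ∈ range T, (u t - u (t + 1) + c * δ) := by
          rw [mul_sum]; exact sum_le_sum fun t _ => h t
      _ = u 0 - u T + T * (c * δ) := by
          rw [sum_add_distrib, sum_range_sub', sum_const, card_range, nsmul_eq_mul]
      _ ≤ u 0 - m + T * (c * δ) := by linarith [hm T]
  have hT' : (T : ℝ) ≠ 0 := Nat.cast_ne_zero.mpr hT.ne'
  have hbound : ∑ t ∈ range T, a t ≤ ∑ _t ∈ range T, ((u 0 - m) / (c * T) + δ) := by
    rw [sum_const, card_range, nsmul_eq_mul]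
    have : (T : ℝ) * ((u 0 - m) / (c * T) + δ) = (u 0 - m + T * (c * δ)) / c := by
      field_simp
    rw [this, le_div_iff₀ hc]
    linarith
  obtain ⟨t, ht, hle⟩ := exists_le_of_sum_le (nonempty_range_iff.mpr hT.ne') hbound
  exact ⟨t, mem_range.mp ht, hle⟩

theorem biased_gradient_descent_rate
    {n : ℕ} (f : EuclideanSpace ℝ (Fin n) → ℝ)
    (f' : EuclideanSpace ℝ (Fin n) → EuclideanSpace ℝ (Fin n))
    (hdiff : ∀ x, HasGradientAt f (f' x) x)
    (L : ℝ) (hLip : ∀ x y, ‖f' x - f' y‖ ≤ L * ‖x - y‖)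
    (fstar : ℝ) (hlb : ∀ x, fstar ≤ f x)
    (γ : ℝ) (hγ : 0 < γ) (hγL : γ ≤ 1 / L)
    (ω : ℕ → EuclideanSpace ℝ (Fin n))
    (e : ℕ → EuclideanSpace ℝ (Fin n))
    (g : ℕ → EuclideanSpace ℝ (Fin n))
    (hg : ∀ t, g t = f' (ω t) + e t)
    (hupd : ∀ t, ω (t + 1) = ω t - γ • g t)
    (ε : ℝ) (hε : ∀ t, ‖e t‖ ≤ ε)
    (T : ℕ) (hT : 0 < T) :
    ∃ t < T, ‖f' (ω t)‖ ^ 2 ≤ 2 * (f (ω 0) - fstar) / (γ * T) + ε ^ 2 := by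
  have hL : 0 < L := by
    by_contra! hL
    linarith [one_div_nonpos.mpr hL]
  have hγL' : γ * L ≤ 1 := (le_div_iff₀ hL).mp hγL
  have hdescent : ∀ t, γ / 2 * ‖f' (ω t)‖ ^ 2 ≤ f (ω t) - f (ω (t + 1)) + γ / 2 * ε ^ 2 := by
    intro t
    have hstep := le_sub_add_of_biased_gradient_step hdiff hLip hγ.le hγL' (ω t) (e t)
    have herr : ‖e t‖ ^ 2 ≤ ε ^ 2 := pow_le_pow_left₀ (norm_nonneg _) (hε t) 2
    rw [← hg, ← hupd] at hstep
    nlinarith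
  obtain ⟨t, ht, hle⟩ := exists_lt_le_of_telescoping (u := fun t => f (ω t)) (half_pos hγ) hT
    (fun t => hlb (ω t)) hdescent
  refine ⟨t, ht, hle.trans_eq ?_⟩
  ring
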